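/- Let n be a positive integer and ℓ an integer with 0 ≤ ℓ ≤ n, and let b ≥ n. The number of pairs (A, y) with A ⊆ {1,…,n}, |A| ≤ ℓ, y ∈ {1,…,b}, excluding those pairs where y ∈ {1,…,n} and y is strictly smaller than every element of A, equals b·∑_{r=0}^{ℓ} C(n,r) − ∑_{r=1}^{ℓ+1} C(n,r). -/

import Mathlib

/-!
Count the complement: there are `b · ∑_{r ≤ ℓ} C(n,r)` pairs `(A, y)` with `|A| ≤ ℓ`, and the
excluded pairs are in bijection with the subsets `B ⊆ {1,…,n}` with `1 ≤ |B| ≤ ℓ + 1` via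
`(A, y) ↦ insert y A`, the inverse reading `y` off as `min B`.
-/

open Finset

theorem Finset.min'_insert_of_forall_lt {α : Type*} [LinearOrder α] {y : α} {A : Finset α}
    (h : ∀ a ∈ A, y < a) : (insert y A).min' (insert_nonempty y A) = y :=
  (min'_eq_iff _ _ _).2 ⟨mem_insert_self y A, by simpa using fun a ha => (h a ha).le⟩

section

variable {α : Type*} [Fintype α]

theorem card_filter_card_mem (s : Finset ℕ) :
    #{A : Finset α | #A ∈ s} = ∑ r ∈ s, (Fintype.card α).choose r := by
  classical
  rw [card_eq_sum_card_fiberwise (t := s) (f := card) fun A hA => by simpa using hA]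
  refine sum_congr rfl fun r hr => ?_
  rw [filter_filter, filter_congr fun A _ => and_iff_right_of_imp fun h : #A = r => h ▸ hr,
    univ_filter_card_eq, card_powersetCard, card_univ]

theorem card_filter_card_le_prod (β : Type*) [Fintype β] (ℓ : ℕ) :
    #{P : Finset α × β | #P.1 ≤ ℓ} =
      (∑ r ∈ range (ℓ + 1), (Fintype.card α).choose r) * Fintype.card β := by
  rw [← univ_product_univ, filter_product_left (fun A : Finset α => #A ≤ ℓ), card_product,
    card_univ, ← card_filter_card_mem]
  simp only [mem_range, Nat.lt_succ_iff]

theorem card_pairs_lt_forall_mem [LinearOrder α] (ℓ : ℕ) :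
    #{P : Finset α × α | #P.1 ≤ ℓ ∧ ∀ a ∈ P.1, P.2 < a} =
      #{B : Finset α | #B ∈ Icc 1 (ℓ + 1)} := by
  have hne {B : Finset α} (hB : B ∈ ({B : Finset α | #B ∈ Icc 1 (ℓ + 1)} : Finset _)) :
      B.Nonempty :=
    card_pos.1 (by simp only [mem_filter, mem_univ, mem_Icc, true_and] at hB; omega)
  refine card_bij' (fun P _ => insert P.2 P.1)
    (fun B hB => (B.erase (B.min' (hne hB)), B.min' (hne hB))) ?_ ?_ ?_ ?_
  · rintro ⟨A, y⟩ hP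
    simp only [mem_filter, mem_univ, true_and, mem_Icc] at hP ⊢
    have := card_insert_le y A
    exact ⟨card_pos.2 (insert_nonempty y A), by omega⟩
  · intro B hB
    have hmin := B.min'_mem (hne hB)
    simp only [mem_filter, mem_univ, true_and, mem_Icc] at hB ⊢
    refine ⟨by rw [card_erase_of_mem hmin]; omega, fun a ha => ?_⟩
    exact lt_of_le_of_ne (B.min'_le a (mem_of_mem_erase ha)) (ne_of_mem_erase ha).symm
  · rintro ⟨A, y⟩ hP
    simp only [mem_filter, mem_univ, true_and] at hP
    have hy : y ∉ A := fun h => lt_irrefl y (hP.2 y h)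
    simp only [min'_insert_of_forall_lt hP.2, erase_insert hy]
  · intro B hB
    exact insert_erase (B.min'_mem (hne hB))

end

theorem Fin.card_pairs_lt_forall_mem_castLE {n b : ℕ} (hb : n ≤ b) (ℓ : ℕ) :
    #{P : Finset (Fin n) × Fin b | #P.1 ≤ ℓ ∧ (P.2 : ℕ) < n ∧ ∀ a ∈ P.1, (P.2 : ℕ) < a} =
      #{B : Finset (Fin n) | #B ∈ Icc 1 (ℓ + 1)} := by
  rw [← card_pairs_lt_forall_mem, eq_comm]
  refine card_bij (fun P _ => (P.1, Fin.castLE hb P.2)) ?_ ?_ ?_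
  · rintro ⟨A, y⟩ hP
    simp only [mem_filter, mem_univ, true_and, Fin.val_castLE] at hP ⊢
    exact ⟨hP.1, y.is_lt, hP.2⟩
  · rintro ⟨A, y⟩ - ⟨A', y'⟩ - h
    simpa using h
  · rintro ⟨A, y⟩ hP
    simp only [mem_filter, mem_univ, true_and] at hP
    exact ⟨(A, ⟨y, hP.2.1⟩),
      by simpa only [mem_filter, mem_univ, true_and] using ⟨hP.1, hP.2.2⟩, rfl⟩

theorem test_loop_count_two_general (n ℓ b : ℕ) (hb : n ≤ b) :
    (Nat.card {P : Finset (Fin n) × Fin b //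
        P.1.card ≤ ℓ ∧ ¬((P.2 : ℕ) < n ∧ ∀ a ∈ P.1, (P.2 : ℕ) < (a : ℕ))} : ℤ) =
      (b : ℤ) * ∑ r ∈ Finset.range (ℓ + 1), (n.choose r : ℤ)
        - ∑ r ∈ Finset.Icc 1 (ℓ + 1), (n.choose r : ℤ) := by
  have hsplit := card_filter_add_card_filter_not (s := {P : Finset (Fin n) × Fin b | #P.1 ≤ ℓ})
    fun P => (P.2 : ℕ) < n ∧ ∀ a ∈ P.1, (P.2 : ℕ) < a
  rw [filter_filter, filter_filter, Fin.card_pairs_lt_forall_mem_castLE hb, card_filter_card_mem,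
    card_filter_card_le_prod, Fintype.card_fin, Fintype.card_fin] at hsplit
  have hsplitℤ := congrArg (Nat.cast : ℕ → ℤ) hsplit
  push_cast at hsplitℤ
  rw [Nat.card_eq_fintype_card, Fintype.card_subtype]
  linarith

/-- Lemma 3.11, `p = 2` case.  The number of pairs `(A, y)` with `A ⊆ {1,…,n}`, `|A| ≤ ℓ`,
`y ∈ {1,…,b}`, excluding those where `y ∈ {1,…,n}` and `y` is strictly smaller than every
element of `A`, equals `b·∑_{r=0}^{ℓ} C(n,r) − ∑_{r=1}^{ℓ+1} C(n,r)`. -/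
theorem test_loop_count_two (n ℓ b : ℕ) (hn : 1 ≤ n) (hℓ : ℓ ≤ n) (hb : n ≤ b) :
    (Nat.card {P : Finset (Fin n) × Fin b //
        P.1.card ≤ ℓ ∧ ¬((P.2 : ℕ) < n ∧ ∀ a ∈ P.1, (P.2 : ℕ) < (a : ℕ))} : ℤ) =
      (b : ℤ) * ∑ r ∈ Finset.range (ℓ + 1), (n.choose r : ℤ)
        - ∑ r ∈ Finset.Icc 1 (ℓ + 1), (n.choose r : ℤ) :=
  test_loop_count_two_general n ℓ b hb
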